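/- Let u₀, u₁ ∈ L⁺ be linearly independent vectors of the open positive light cone, let λ₀, λ₁ be positive real numbers, and let ε ∈ {+1, −1} specify a side of the plane through the origin spanned by u₀ and u₁. Then there exists a unique v ∈ L⁺ such that λ(v,u₀) = λ₀, λ(v,u₁) = λ₁ (i.e. −⟨v,u_i⟩ = λ_i² for i = 0,1), and the determinant of the 3×3 matrix with rows u₀, u₁, v has sign ε. Moreover, v depends continuously on (u₀, u₁, λ₀, λ₁). -/

import Mathlib

/-- The Minkowski bilinear form on `ℝ³` with quadratic form `x² + y² - z²`. -/
def mink (u v : Fin 3 → ℝ) : ℝ := u 0 * v 0 + u 1 * v 1 - u 2 * v 2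

/-- The open positive light cone `L⁺`. -/
def Lplus : Set (Fin 3 → ℝ) := {u | mink u u = 0 ∧ 0 < u 2}

/-- The space of data: a linearly independent pair `u₀, u₁` of points of the light
cone together with a pair of positive reals `λ₀, λ₁`. -/
def Data : Set ((Fin 3 → ℝ) × (Fin 3 → ℝ) × ℝ × ℝ) :=
  {p | p.1 ∈ Lplus ∧ p.2.1 ∈ Lplus ∧ LinearIndependent ℝ ![p.1, p.2.1] ∧
    0 < p.2.2.1 ∧ 0 < p.2.2.2}

noncomputable section PennerAux

/-- Minkowski "normal" vector to the plane spanned by `u, w`. -/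
def nvec (u w : Fin 3 → ℝ) : Fin 3 → ℝ :=
  ![u 1 * w 2 - u 2 * w 1, u 2 * w 0 - u 0 * w 2, u 1 * w 0 - u 0 * w 1]

lemma mink_comm (u v : Fin 3 → ℝ) : mink u v = mink v u := by unfold mink; ring

lemma nvec_orth_left (u w : Fin 3 → ℝ) : mink (nvec u w) u = 0 := by
  simp [mink, nvec]; ring

lemma nvec_orth_right (u w : Fin 3 → ℝ) : mink (nvec u w) w = 0 := by
  simp [mink, nvec]; ring

lemma nvec_self (u w : Fin 3 → ℝ) :
    mink (nvec u w) (nvec u w) = mink u w ^ 2 - mink u u * mink w w := by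
  simp [mink, nvec]; ring

lemma mink_lin (u w n' x : Fin 3 → ℝ) (A B C : ℝ) :
    mink (fun i => A * u i + B * w i + C * n' i) x
      = A * mink u x + B * mink w x + C * mink n' x := by unfold mink; ring

lemma det_eq (u w v : Fin 3 → ℝ) :
    (Matrix.of ![u, w, v]).det = mink (nvec u w) v := by
  rw [Matrix.det_fin_three]; simp [mink, nvec, Matrix.of_apply]; ring

lemma key_ident (u w v : Fin 3 → ℝ) :
    mink (nvec u w) v ^ 2
      = mink u w ^ 2 * mink v v - 2 * mink u w * mink v u * mink v w
        + mink u u * (mink v w) ^ 2 + mink w w * (mink v u) ^ 2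
        - mink u u * mink w w * mink v v := by
  simp [mink, nvec]; ring

lemma mink_neg_of_li {u w : Fin 3 → ℝ} (hu : u ∈ Lplus) (hw : w ∈ Lplus)
    (h : LinearIndependent ℝ ![u, w]) : mink u w < 0 := by
  obtain ⟨hq0, hz0⟩ := hu
  obtain ⟨hq1, hz1⟩ := hw
  unfold mink at hq0 hq1 ⊢
  have hle : u 0 * w 0 + u 1 * w 1 - u 2 * w 2 ≤ 0 := by
    nlinarith [sq_nonneg (u 0 * w 2 - w 0 * u 2), sq_nonneg (u 1 * w 2 - w 1 * u 2),
      mul_pos hz0 hz1]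
  rcases lt_or_eq_of_le hle with h' | h'
  · exact h'
  · exfalso
    have hs : (u 0 * w 2 - w 0 * u 2) ^ 2 + (u 1 * w 2 - w 1 * u 2) ^ 2 = 0 := by
      linear_combination (w 2) ^ 2 * hq0 + (u 2) ^ 2 * hq1 - 2 * (u 2) * (w 2) * h'
    have h1 : u 0 * w 2 - w 0 * u 2 = 0 := by
      have := (add_eq_zero_iff_of_nonneg (sq_nonneg _) (sq_nonneg _)).mp hs
      exact pow_eq_zero_iff (n := 2) (by norm_num) |>.mp this.1
    have h2 : u 1 * w 2 - w 1 * u 2 = 0 := by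
      have := (add_eq_zero_iff_of_nonneg (sq_nonneg _) (sq_nonneg _)).mp hs
      exact pow_eq_zero_iff (n := 2) (by norm_num) |>.mp this.2
    have := (LinearIndependent.pair_iff.mp h (w 2) (-(u 2)) ?_).1
    · exact hz1.ne' this
    · funext i
      fin_cases i
      · show w 2 * u 0 + -u 2 * w 0 = (0:ℝ); linarith
      · show w 2 * u 1 + -u 2 * w 1 = (0:ℝ); linarith
      · show w 2 * u 2 + -u 2 * w 2 = (0:ℝ); ring

lemma zpos {v u : Fin 3 → ℝ} (hv : mink v v = 0) (hu : u ∈ Lplus)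
    (hneg : mink v u < 0) : 0 < v 2 := by
  obtain ⟨hq, hz⟩ := hu
  unfold mink at hv hq hneg
  by_contra hle
  push_neg at hle
  rcases lt_or_eq_of_le hle with hlt | heq
  · have h1 : 0 < -(v 2 * u 2) := by
      have := mul_pos (neg_pos.mpr hlt) hz; linarith [this]
    have h2 : 0 < v 2 * u 2 - (v 0 * u 0 + v 1 * u 1) := by linarith
    nlinarith [sq_nonneg (v 0 * u 2 - u 0 * v 2), sq_nonneg (v 1 * u 2 - u 1 * v 2),
      mul_pos h1 h2]
  · have h0 : v 0 ^ 2 + v 1 ^ 2 = 0 := by nlinarith [heq]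
    have hpair := (add_eq_zero_iff_of_nonneg (sq_nonneg (v 0)) (sq_nonneg (v 1))).mp h0
    have hv0 : v 0 = 0 := pow_eq_zero_iff (n := 2) (by norm_num) |>.mp hpair.1
    have hv1 : v 1 = 0 := pow_eq_zero_iff (n := 2) (by norm_num) |>.mp hpair.2
    rw [hv0, hv1, heq] at hneg
    simp at hneg

/-- The explicit solution. -/
def Faux (ε : ℝ) (p : (Fin 3 → ℝ) × (Fin 3 → ℝ) × ℝ × ℝ) : Fin 3 → ℝ :=
  fun i =>
    (-p.2.2.2 ^ 2 / mink p.1 p.2.1) * p.1 i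
    + (-p.2.2.1 ^ 2 / mink p.1 p.2.1) * p.2.1 i
    + (ε * Real.sqrt 2 * p.2.2.1 * p.2.2.2 / Real.sqrt (-mink p.1 p.2.1) ^ 3)
        * nvec p.1 p.2.1 i

set_option maxHeartbeats 800000 in
lemma Faux_props (ε : ℝ) (hε : ε = 1 ∨ ε = -1) {u w : Fin 3 → ℝ} {l0 l1 : ℝ}
    (hu : u ∈ Lplus) (hw : w ∈ Lplus) (hli : LinearIndependent ℝ ![u, w])
    (hl0 : 0 < l0) (hl1 : 0 < l1) :
    mink (Faux ε (u, w, l0, l1)) (Faux ε (u, w, l0, l1)) = 0 ∧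
    mink (Faux ε (u, w, l0, l1)) u = -l0 ^ 2 ∧
    mink (Faux ε (u, w, l0, l1)) w = -l1 ^ 2 ∧
    Real.sign (mink (nvec u w) (Faux ε (u, w, l0, l1))) = ε ∧
    0 < Faux ε (u, w, l0, l1) 2 := by
  obtain ⟨hq0, hz0⟩ := hu
  obtain ⟨hq1, hz1⟩ := hw
  have hm : mink u w < 0 := mink_neg_of_li ⟨hq0, hz0⟩ ⟨hq1, hz1⟩ hli
  have hmne : mink u w ≠ 0 := ne_of_lt hm
  set m : ℝ := mink u w with hmdef
  set s : ℝ := Real.sqrt (-m) with hsdef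
  have hs2 : s ^ 2 = -m := Real.sq_sqrt (by linarith)
  have hspos : 0 < s := Real.sqrt_pos.mpr (by linarith)
  have h2 : Real.sqrt 2 ^ 2 = 2 := Real.sq_sqrt (by norm_num)
  have h2pos : 0 < Real.sqrt 2 := Real.sqrt_pos.mpr (by norm_num)
  have hε2 : ε ^ 2 = 1 := by rcases hε with rfl | rfl <;> norm_num
  set A : ℝ := -l1 ^ 2 / m with hAdef
  set B : ℝ := -l0 ^ 2 / m with hBdef
  set C : ℝ := ε * Real.sqrt 2 * l0 * l1 / s ^ 3 with hCdef
  set n : Fin 3 → ℝ := nvec u w with hndef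
  have hFeq : Faux ε (u, w, l0, l1) = fun i => A * u i + B * w i + C * n i := rfl
  have hwu : mink w u = m := by rw [mink_comm]
  have hnu : mink n u = 0 := nvec_orth_left u w
  have hnw : mink n w = 0 := nvec_orth_right u w
  have hnn : mink n n = m ^ 2 := by
    rw [hndef, nvec_self, hq0, hq1]; ring
  have e_u : mink (Faux ε (u, w, l0, l1)) u = -l0 ^ 2 := by
    rw [hFeq, mink_lin, hq0, hwu, hnu, hBdef]
    field_simp
    ring
  have e_w : mink (Faux ε (u, w, l0, l1)) w = -l1 ^ 2 := by
    rw [hFeq, mink_lin, hq1, hnw, hAdef]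
    field_simp
    rw [← hmdef]; ring
  have e_n : mink n (Faux ε (u, w, l0, l1)) = C * m ^ 2 := by
    rw [mink_comm, hFeq, mink_lin, mink_comm u n, mink_comm w n, hnu, hnw, hnn]
    ring
  have hs6 : s ^ 6 = -m ^ 3 := by linear_combination (s ^ 4 - s ^ 2 * m + m ^ 2) * hs2
  have hsne : s ≠ 0 := hspos.ne'
  have hC2 : C ^ 2 * m ^ 3 = -2 * l0 ^ 2 * l1 ^ 2 := by
    have hs3 : (s ^ 3) ^ 2 = -m ^ 3 := by rw [← pow_mul]; exact hs6
    rw [hCdef, div_pow, hs3, mul_pow, mul_pow, mul_pow, hε2, h2, div_mul_eq_mul_div,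
      div_eq_iff (neg_ne_zero.mpr (pow_ne_zero 3 hmne))]
    ring
  have hQ : mink (Faux ε (u, w, l0, l1)) (Faux ε (u, w, l0, l1)) = 0 := by
    have expand : mink (Faux ε (u, w, l0, l1)) (Faux ε (u, w, l0, l1))
        = A * mink u (Faux ε (u, w, l0, l1)) + B * mink w (Faux ε (u, w, l0, l1))
          + C * mink n (Faux ε (u, w, l0, l1)) := by
      nth_rewrite 1 [hFeq]
      rw [mink_lin]
    rw [expand, mink_comm u _, mink_comm w _, e_u, e_w, e_n]
    rw [hAdef, hBdef]
    field_simp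
    linear_combination hC2
  refine ⟨hQ, e_u, e_w, ?_, ?_⟩
  · rw [e_n]
    have hm2 : 0 < m ^ 2 := by nlinarith
    rcases hε with rfl | rfl
    · apply Real.sign_of_pos
      have hCpos : 0 < C := by
        rw [hCdef]
        apply div_pos (by nlinarith [mul_pos (mul_pos h2pos hl0) hl1]) (pow_pos hspos 3)
      exact mul_pos hCpos hm2
    · apply Real.sign_of_neg
      have hCneg : C < 0 := by
        rw [hCdef]
        apply div_neg_of_neg_of_pos (by nlinarith [mul_pos (mul_pos h2pos hl0) hl1]) (pow_pos hspos 3)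
      exact mul_neg_of_neg_of_pos hCneg hm2
  · exact zpos hQ ⟨hq0, hz0⟩ (by rw [e_u]; nlinarith)

lemma uniq_aux {ε : ℝ} (hε : ε = 1 ∨ ε = -1) {u w : Fin 3 → ℝ} {l0 l1 : ℝ}
    (hu : u ∈ Lplus) (hw : w ∈ Lplus) (hli : LinearIndependent ℝ ![u, w])
    (hl0 : 0 < l0) (hl1 : 0 < l1) {v₁ v₂ : Fin 3 → ℝ}
    (hQ₁ : mink v₁ v₁ = 0) (he₁u : mink v₁ u = -l0 ^ 2) (he₁w : mink v₁ w = -l1 ^ 2)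
    (hs₁ : Real.sign (mink (nvec u w) v₁) = ε)
    (hQ₂ : mink v₂ v₂ = 0) (he₂u : mink v₂ u = -l0 ^ 2) (he₂w : mink v₂ w = -l1 ^ 2)
    (hs₂ : Real.sign (mink (nvec u w) v₂) = ε) :
    v₁ = v₂ := by
  obtain ⟨hq0, hz0⟩ := hu
  obtain ⟨hq1, hz1⟩ := hw
  have hm : mink u w < 0 := mink_neg_of_li ⟨hq0, hz0⟩ ⟨hq1, hz1⟩ hli
  set m : ℝ := mink u w with hmdef
  set n : Fin 3 → ℝ := nvec u w with hndef
  have key : ∀ v : Fin 3 → ℝ, mink v v = 0 → mink v u = -l0 ^ 2 → mink v w = -l1 ^ 2 →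
      (mink n v) ^ 2 = -2 * m * l0 ^ 2 * l1 ^ 2 := by
    intro v hQ heu hew
    have h := key_ident u w v
    rw [hQ, heu, hew, hq0, hq1] at h
    linear_combination h
  have hd₁ := key v₁ hQ₁ he₁u he₁w
  have hd₂ := key v₂ hQ₂ he₂u he₂w
  have hpos : 0 < -2 * m * l0 ^ 2 * l1 ^ 2 := by nlinarith [mul_pos (mul_pos (neg_pos.mpr hm) (pow_pos hl0 2)) (pow_pos hl1 2)]
  have hne₂ : mink n v₂ ≠ 0 := by
    intro h
    rw [h] at hd₂
    rw [← hd₂] at hpos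
    simp at hpos
  have hεne : ε ≠ 0 := by rcases hε with rfl | rfl <;> norm_num
  have hnn_eq : mink n v₁ = mink n v₂ := by
    have hdiff : (mink n v₁ - mink n v₂) * (mink n v₁ + mink n v₂) = 0 := by
      linear_combination hd₁ - hd₂
    rcases mul_eq_zero.mp hdiff with h | h
    · linarith
    · exfalso
      have h' : mink n v₁ = -(mink n v₂) := by linarith
      rw [h', Real.sign_neg, hs₂] at hs₁
      exact hεne (by linarith)
  -- Now the linear system.
  set Amat : Matrix (Fin 3) (Fin 3) ℝ :=
    Matrix.of ![![u 0, u 1, -(u 2)], ![w 0, w 1, -(w 2)], ![n 0, n 1, -(n 2)]] with hAdef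
  have hdet : Amat.det = -(mink n n) := by
    rw [Matrix.det_fin_three]
    simp only [hAdef, hndef, Matrix.of_apply, Matrix.cons_val', Matrix.cons_val_zero,
      Matrix.cons_val_one, Matrix.head_cons, Matrix.empty_val', Matrix.cons_val_fin_one,
      Matrix.head_fin_const, Matrix.cons_val_two, Matrix.tail_cons]
    simp [mink, nvec]
    ring
  have hdetne : Amat.det ≠ 0 := by
    rw [hdet, hndef, nvec_self, hq0, hq1]
    have : m ≠ 0 := ne_of_lt hm
    simp only [mul_zero, zero_mul, sub_zero, ne_eq, neg_eq_zero]
    exact pow_ne_zero 2 this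
  have hmul : Matrix.mulVec Amat (fun i => v₁ i - v₂ i) = 0 := by
    have eu : mink v₁ u = mink v₂ u := by rw [he₁u, he₂u]
    have ew : mink v₁ w = mink v₂ w := by rw [he₁w, he₂w]
    have en : mink v₁ n = mink v₂ n := by
      rw [mink_comm v₁ n, mink_comm v₂ n]; exact hnn_eq
    unfold mink at eu ew en
    funext j
    rw [hAdef, Matrix.mulVec, dotProduct]
    simp only [Fin.sum_univ_three, Matrix.of_apply, Pi.zero_apply]
    fin_cases j <;>
      simp only [Matrix.cons_val_zero, Matrix.cons_val_one, Matrix.head_cons,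
        Matrix.cons_val_two, Matrix.tail_cons, Fin.isValue, Fin.zero_eta, Fin.mk_one,
        Fin.reduceFinMk] <;>
      linarith [eu, ew, en]
  have hzero : (fun i => v₁ i - v₂ i) = 0 := Matrix.eq_zero_of_mulVec_eq_zero hdetne hmul
  funext i
  have := congrFun hzero i
  simpa [sub_eq_zero] using this

lemma Faux_cont (ε : ℝ) : Continuous fun p : Data => Faux ε p.val := by
  have hval : Continuous (Subtype.val : Data → _) := continuous_subtype_val
  have hu : Continuous fun p : Data => p.val.1 := continuous_fst.comp hval
  have hw : Continuous fun p : Data => p.val.2.1 :=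
    continuous_fst.comp (continuous_snd.comp hval)
  have hl0 : Continuous fun p : Data => p.val.2.2.1 :=
    continuous_fst.comp (continuous_snd.comp (continuous_snd.comp hval))
  have hl1 : Continuous fun p : Data => p.val.2.2.2 :=
    continuous_snd.comp (continuous_snd.comp (continuous_snd.comp hval))
  have hui : ∀ i, Continuous fun p : Data => p.val.1 i :=
    fun i => (continuous_apply i).comp hu
  have hwi : ∀ i, Continuous fun p : Data => p.val.2.1 i :=
    fun i => (continuous_apply i).comp hw
  have hm : Continuous fun p : Data => mink p.val.1 p.val.2.1 := by
    unfold mink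
    exact (((hui 0).mul (hwi 0)).add ((hui 1).mul (hwi 1))).sub ((hui 2).mul (hwi 2))
  have hmneg : ∀ p : Data, mink p.val.1 p.val.2.1 < 0 := by
    intro p
    obtain ⟨h1, h2, h3, _, _⟩ := p.property
    exact mink_neg_of_li h1 h2 h3
  have hmne : ∀ p : Data, mink p.val.1 p.val.2.1 ≠ 0 := fun p => ne_of_lt (hmneg p)
  have hA : Continuous fun p : Data => -p.val.2.2.2 ^ 2 / mink p.val.1 p.val.2.1 :=
    ((hl1.pow 2).neg).div hm hmne
  have hB : Continuous fun p : Data => -p.val.2.2.1 ^ 2 / mink p.val.1 p.val.2.1 :=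
    ((hl0.pow 2).neg).div hm hmne
  have hC : Continuous fun p : Data =>
      ε * Real.sqrt 2 * p.val.2.2.1 * p.val.2.2.2
        / Real.sqrt (-mink p.val.1 p.val.2.1) ^ 3 := by
    apply Continuous.div
    · exact (continuous_const.mul hl0).mul hl1
    · exact (Real.continuous_sqrt.comp hm.neg).pow 3
    · intro p
      have : 0 < Real.sqrt (-mink p.val.1 p.val.2.1) :=
        Real.sqrt_pos.mpr (by linarith [hmneg p])
      exact (pow_pos this 3).ne'
  have hni : ∀ i, Continuous fun p : Data => nvec p.val.1 p.val.2.1 i := by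
    intro i
    fin_cases i
    · simp [nvec]; exact ((hui 1).mul (hwi 2)).sub ((hui 2).mul (hwi 1))
    · simp [nvec]; exact ((hui 2).mul (hwi 0)).sub ((hui 0).mul (hwi 2))
    · simp [nvec]; exact ((hui 1).mul (hwi 0)).sub ((hui 0).mul (hwi 1))
  apply continuous_pi
  intro i
  unfold Faux
  exact ((hA.mul (hui i)).add (hB.mul (hwi i))).add (hC.mul (hni i))

end PennerAux

/-- Lemma 2 of [Penner, Lemma 2.3]: given linearly independent `u₀, u₁ ∈ L⁺`, positive
numbers `λ₀, λ₁`, and a chosen side `ε ∈ {±1}` of the plane through the origin spanned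
by `u₀, u₁`, there is a unique `v ∈ L⁺` with `-⟨v, u_i⟩ = λ_i²` lying on this side
(the determinant of the matrix with rows `u₀, u₁, v` has sign `ε`), and `v` depends
continuously on `(u₀, u₁, λ₀, λ₁)`. -/
theorem third_point_exists_unique_continuous (ε : ℝ) (hε : ε = 1 ∨ ε = -1) :
    ∃ F : Data → (Fin 3 → ℝ),
      Continuous F ∧
      ∀ p : Data,
        (F p ∈ Lplus ∧
          -(mink (F p) p.val.1) = p.val.2.2.1 ^ 2 ∧
          -(mink (F p) p.val.2.1) = p.val.2.2.2 ^ 2 ∧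
          Real.sign (Matrix.det (Matrix.of ![p.val.1, p.val.2.1, F p])) = ε) ∧
        (∀ v : Fin 3 → ℝ,
          (v ∈ Lplus ∧
            -(mink v p.val.1) = p.val.2.2.1 ^ 2 ∧
            -(mink v p.val.2.1) = p.val.2.2.2 ^ 2 ∧
            Real.sign (Matrix.det (Matrix.of ![p.val.1, p.val.2.1, v])) = ε) →
          v = F p) := by
  refine ⟨fun p => Faux ε p.val, Faux_cont ε, ?_⟩
  intro p
  obtain ⟨hu, hw, hli, hl0, hl1⟩ := p.property
  have hptup : p.val = (p.val.1, p.val.2.1, p.val.2.2.1, p.val.2.2.2) := rfl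
  have hprops := Faux_props ε hε hu hw hli hl0 hl1
  rw [← hptup] at hprops
  obtain ⟨hQ, heu, hew, hsgn, hz⟩ := hprops
  constructor
  · refine ⟨⟨hQ, hz⟩, by rw [heu]; ring, by rw [hew]; ring, ?_⟩
    rw [det_eq]
    exact hsgn
  · rintro v ⟨⟨hvQ, hvz⟩, hvu, hvw, hvsgn⟩
    rw [det_eq] at hvsgn
    exact uniq_aux hε hu hw hli hl0 hl1 hvQ (by linarith) (by linarith)
      hvsgn hQ heu hew hsgn
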